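/- arXiv:2112.00518 — 2 statements merged into one kernel-verified Lean document; each statement's English description precedes it below -/
import Mathlib

section
/- Let α=(α_1,…,α_{2s}) be a composition of n with an even number of parts and let sh(α)=(α_2,…,α_{2s},α_1) be its one-step cyclic shift. Then the rank sequence of F̄(sh(α)) is the reverse of the rank sequence of F̄(α): r̄(sh(α))_k = r̄(α)_{n−k} for all k. In particular, for every k ∈ ℕ and every even number of parts, the rank sequence of F̄((k,1,1,…,1)) is symmetric. -/
attribute [local instance] Classical.propDecidable

noncomputable section

/-- `α` is a composition: a nonempty list of positive integers. -/
def IsComposition (α : List ℕ) : Prop := α ≠ [] ∧ ∀ p ∈ α, 0 < p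

/-- The 0-based index of the segment of the composition `α` containing edge `e`,
where edge `e` joins nodes `e` and `e+1` (nodes are 0-indexed, so node `i`
is the element `x_{i+1}` of the fence). -/
def segIdx (α : List ℕ) (e : ℕ) : ℕ :=
  ((List.range α.length).filter fun j => decide ((α.take (j + 1)).sum ≤ e)).length

/-- Edge `e` of the fence of `α` points upwards (node `e` ⪯ node `e+1`):
edges in odd (1-based) segments point up, edges in even segments point down. -/
def upEdge (α : List ℕ) (e : ℕ) : Prop := Even (segIdx α e)

/-- The defining relations of the fence poset `F(α)` on `Fin (α.sum + 1)`:
`fenceStep α x y` holds iff `x ⪯ y` is one of the generating (cover) relations. -/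
def fenceStep (α : List ℕ) (x y : Fin (α.sum + 1)) : Prop :=
  (y.val = x.val + 1 ∧ upEdge α x.val) ∨ (x.val = y.val + 1 ∧ ¬ upEdge α y.val)

/-- The order of the fence poset `F(α)`, i.e. the partial order generated by
the defining relations. -/
def fenceLE (α : List ℕ) : Fin (α.sum + 1) → Fin (α.sum + 1) → Prop :=
  Relation.ReflTransGen (fenceStep α)

/-- Lower (order) ideals of the fence poset `F(α)`. -/
def IsFenceIdeal (α : List ℕ) (I : Finset (Fin (α.sum + 1))) : Prop :=
  ∀ x y, fenceLE α x y → y ∈ I → x ∈ I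

/-- `fenceRank α k` is the number of lower ideals of `F(α)` of size `k`;
the rank sequence of `F(α)` is `fenceRank α 0, …, fenceRank α (α.sum + 1)`. -/
def fenceRank (α : List ℕ) (k : ℕ) : ℕ :=
  Nat.card {I : Finset (Fin (α.sum + 1)) // IsFenceIdeal α I ∧ I.card = k}

/-- Defining relations of the circular fence poset `F̄(α)` on `Fin α.sum`:
as for the fence, but node `α.sum` (that is, `x_{n+1}`) is identified with node `0`. -/
def cStep (α : List ℕ) (x y : Fin α.sum) : Prop :=
  (y.val = (x.val + 1) % α.sum ∧ upEdge α x.val) ∨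
  (x.val = (y.val + 1) % α.sum ∧ ¬ upEdge α y.val)

/-- The order of the circular fence poset `F̄(α)`. -/
def cLE (α : List ℕ) : Fin α.sum → Fin α.sum → Prop :=
  Relation.ReflTransGen (cStep α)

/-- Lower (order) ideals of the circular fence poset `F̄(α)`. -/
def IsCIdeal (α : List ℕ) (I : Finset (Fin α.sum)) : Prop :=
  ∀ x y, cLE α x y → y ∈ I → x ∈ I

/-- `cRank α k` is the number of lower ideals of `F̄(α)` of size `k`;
the rank sequence of `F̄(α)` is `cRank α 0, …, cRank α α.sum`. -/
def cRank (α : List ℕ) (k : ℕ) : ℕ :=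
  Nat.card {I : Finset (Fin α.sum) // IsCIdeal α I ∧ I.card = k}

/-- The sequence `a 0, …, a m` is unimodal. -/
def Unimodal (a : ℕ → ℕ) (m : ℕ) : Prop :=
  ∃ j ≤ m, (∀ i < j, a i ≤ a (i + 1)) ∧ ∀ i, j ≤ i → i < m → a (i + 1) ≤ a i

/-- The sequence `a 0, …, a m` is bottom interlacing:
`a m ≤ a 0 ≤ a (m-1) ≤ a 1 ≤ ⋯ ≤ a ⌊m/2⌋`. -/
def BottomInterlacing (a : ℕ → ℕ) (m : ℕ) : Prop :=
  (∀ i, 2 * i ≤ m → a (m - i) ≤ a i) ∧ ∀ i, 2 * i + 1 < m → a i ≤ a (m - 1 - i)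

/-- The sequence `a 0, …, a m` is top interlacing:
`a 0 ≤ a m ≤ a 1 ≤ a (m-1) ≤ ⋯ ≤ a ⌈m/2⌉`. -/
def TopInterlacing (a : ℕ → ℕ) (m : ℕ) : Prop :=
  (∀ i, 2 * i ≤ m → a i ≤ a (m - i)) ∧ ∀ i, 2 * i + 1 < m → a (m - i) ≤ a (i + 1)

/-- The sequence `a 0, …, a m` is symmetric. -/
def SymmetricSeq (a : ℕ → ℕ) (m : ℕ) : Prop := ∀ k ≤ m, a k = a (m - k)

/-- Rowmotion for the order relation `r` on `Fin m`: `rhoRel r I` is the lower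
ideal generated by the minimal elements of the complement of `I`. -/
def rhoRel {m : ℕ} (r : Fin m → Fin m → Prop) (I : Finset (Fin m)) : Finset (Fin m) :=
  Finset.univ.filter fun x => ∃ y, y ∉ I ∧ (∀ z, r z y → z ≠ y → z ∈ I) ∧ r x y

/-- The (forward) orbit of `I` under a rowmotion map `ρ`. -/
def orbitOf {m : ℕ} (ρ : Finset (Fin m) → Finset (Fin m)) (I : Finset (Fin m)) :
    Finset (Finset (Fin m)) :=
  Finset.univ.filter fun J => ∃ k, ρ^[k] I = J

/-- The number of maximal elements of `I` viewed as a subposet of the order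
with relation `r`. -/
def maxCount {m : ℕ} (r : Fin m → Fin m → Prop) (I : Finset (Fin m)) : ℕ :=
  (I.filter fun x => ∀ y ∈ I, r x y → y = x).card

end

/-!
Relabel the nodes of `F̄(sh α)` by `x ↦ x + α₁`: edge `e` of `sh α` becomes edge `e + α₁` of `α`,
and its segment index moves by one modulo the even number of parts, so every edge flips. This
makes `F̄(sh α)` anti-isomorphic to `F̄(α)`, and complementation matches its lower ideals of size
`k` with those of `F̄(α)` of size `n - k`. Likewise `x ↦ -x` is an isomorphism
`F̄(α) ≅ F̄(rev α)`; since `rev (k,1,…,1) = sh (k,1,…,1)`, that rank sequence is symmetric.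
-/

section DownClosed

variable {X Y : Type*}

def IsDownClosed (r : X → X → Prop) (I : Finset X) : Prop :=
  ∀ x y, r x y → y ∈ I → x ∈ I

noncomputable def downClosedCount (r : X → X → Prop) (k : ℕ) : ℕ :=
  Nat.card {I : Finset X // IsDownClosed r I ∧ I.card = k}

theorem isDownClosed_iff_reflTransGen {r : X → X → Prop} {I : Finset X} :
    IsDownClosed r I ↔ ∀ x y, Relation.ReflTransGen r x y → y ∈ I → x ∈ I := by
  refine ⟨fun hI x y hxy hy => ?_, fun hI x y hxy => hI x y (.single hxy)⟩
  induction hxy using Relation.ReflTransGen.head_induction_on with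
  | refl => exact hy
  | head hac _ ih => exact hI _ _ hac ih

theorem isDownClosed_map_iff {r : X → X → Prop} {s : Y → Y → Prop} (φ : X ≃ Y)
    (h : ∀ x y, r x y ↔ s (φ x) (φ y)) (I : Finset X) :
    IsDownClosed s (I.map φ.toEmbedding) ↔ IsDownClosed r I := by
  simp only [IsDownClosed, φ.forall_congr_left, h, Finset.mem_map_equiv,
    Equiv.apply_symm_apply]

theorem downClosedCount_congr {r : X → X → Prop} {s : Y → Y → Prop} (φ : X ≃ Y)
    (h : ∀ x y, r x y ↔ s (φ x) (φ y)) (k : ℕ) :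
    downClosedCount r k = downClosedCount s k :=
  Nat.card_congr <| φ.finsetCongr.subtypeEquiv fun I => by
    rw [Equiv.finsetCongr_apply, isDownClosed_map_iff φ h, Finset.card_map]

theorem isDownClosed_swap_iff [Fintype X] [DecidableEq X] {r : X → X → Prop} {I : Finset X} :
    IsDownClosed (Function.swap r) I ↔ IsDownClosed r Iᶜ := by
  simp only [IsDownClosed, Function.swap, Finset.mem_compl]
  exact ⟨fun hI x y hxy hy hx => hy (hI y x hxy hx), fun hI x y hxy hy => by
    by_contra hx; exact hI y x hxy hx hy⟩

theorem downClosedCount_swap [Fintype X] {r : X → X → Prop} {k : ℕ}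
    (hk : k ≤ Fintype.card X) :
    downClosedCount (Function.swap r) k = downClosedCount r (Fintype.card X - k) := by
  refine Nat.card_congr <| (Function.Involutive.toPerm _ compl_compl).subtypeEquiv fun I => ?_
  have := I.card_le_univ
  change _ ∧ _ ↔ _ ∧ Iᶜ.card = _
  rw [isDownClosed_swap_iff, Finset.card_compl]
  exact and_congr_right fun _ => by omega

end DownClosed

section CircularFence

/-- The circular fence with edge orientations `u`, so that
`cStep α = cycFenceStep α.sum (upEdge α)`. -/
def cycFenceStep (n : ℕ) (u : ℕ → Prop) (x y : Fin n) : Prop :=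
  (y.val = (x.val + 1) % n ∧ u x.val) ∨ (x.val = (y.val + 1) % n ∧ ¬ u y.val)

theorem cRank_eq_downClosedCount (α : List ℕ) (k : ℕ) :
    cRank α k = downClosedCount (cycFenceStep α.sum (upEdge α)) k := by
  simp only [cRank, IsCIdeal, downClosedCount, isDownClosed_iff_reflTransGen]
  rfl

variable {n : ℕ} {u v : ℕ → Prop}

theorem cycFenceStep_iff [NeZero n] {x y : Fin n} :
    cycFenceStep n u x y ↔ (y = x + 1 ∧ u x) ∨ (x = y + 1 ∧ ¬ u y) := by
  simp only [cycFenceStep, Fin.ext_iff, Fin.val_add, Fin.val_one', Nat.add_mod_mod]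

theorem cycFenceStep_add_iff [NeZero n] (a : Fin n) (h : ∀ e : Fin n, v ↑(e + a) ↔ ¬ u e)
    (x y : Fin n) : cycFenceStep n u x y ↔ cycFenceStep n v (y + a) (x + a) := by
  rw [cycFenceStep_iff, cycFenceStep_iff, h, h, not_not, add_right_comm x a 1,
    add_right_comm y a 1, add_left_inj, add_left_inj, or_comm]

theorem cycFenceStep_neg_iff [NeZero n] (h : ∀ e : Fin n, v ↑(-(e + 1)) ↔ ¬ u e)
    (x y : Fin n) : cycFenceStep n u x y ↔ cycFenceStep n v (-x) (-y) := by
  have neg_eq_neg_add_one : ∀ a b : Fin n, -a = -b + 1 ↔ b = a + 1 := fun a b => by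
    rw [eq_neg_add_iff_add_eq, ← sub_eq_add_neg, sub_eq_iff_eq_add, add_comm 1]
  rw [cycFenceStep_iff, cycFenceStep_iff, neg_eq_neg_add_one, neg_eq_neg_add_one]
  constructor <;> rintro (⟨rfl, hx⟩ | ⟨rfl, hy⟩)
  · exact Or.inr ⟨rfl, by rwa [h, not_not]⟩
  · exact Or.inl ⟨rfl, (h y).2 hy⟩
  · exact Or.inr ⟨rfl, (h y).1 hx⟩
  · exact Or.inl ⟨rfl, by rwa [h, not_not] at hy⟩

theorem Fin.val_neg_add_one [NeZero n] (e : Fin n) : ((-(e + 1) : Fin n) : ℕ) = n - 1 - e := by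
  rw [Fin.val_neg', Fin.val_add, Fin.val_one', Nat.add_mod_mod]
  rcases (show e.val + 1 ≤ n from e.isLt).eq_or_lt with he | he
  · rw [he, Nat.mod_self, Nat.sub_zero, Nat.mod_self]
    omega
  · rw [Nat.mod_eq_of_lt he, Nat.mod_eq_of_lt (by omega)]
    omega

theorem downClosedCount_cycFenceStep_zero (k : ℕ) :
    downClosedCount (cycFenceStep 0 u) k = downClosedCount (cycFenceStep 0 v) k :=
  downClosedCount_congr (Equiv.refl _) (fun x => x.elim0) k

theorem downClosedCount_cycFenceStep_shift (a : ℕ) (h : ∀ e < n, v ((e + a) % n) ↔ ¬ u e)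
    {k : ℕ} (hk : k ≤ n) :
    downClosedCount (cycFenceStep n u) k = downClosedCount (cycFenceStep n v) (n - k) := by
  rcases Nat.eq_zero_or_pos n with rfl | hn
  · obtain rfl : k = 0 := Nat.le_zero.mp hk
    exact downClosedCount_cycFenceStep_zero 0
  have : NeZero n := ⟨hn.ne'⟩
  have hstep := cycFenceStep_add_iff (Fin.ofNat n a) fun e => by
    rw [Fin.val_add, Fin.val_ofNat, Nat.add_mod_mod]
    exact h e e.isLt
  rw [downClosedCount_congr (s := Function.swap (cycFenceStep n v)) (Equiv.addRight _) hstep,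
    downClosedCount_swap (by simpa using hk), Fintype.card_fin]

theorem downClosedCount_cycFenceStep_reflect (h : ∀ e < n, v (n - 1 - e) ↔ ¬ u e) (k : ℕ) :
    downClosedCount (cycFenceStep n u) k = downClosedCount (cycFenceStep n v) k := by
  rcases Nat.eq_zero_or_pos n with rfl | hn
  · exact downClosedCount_cycFenceStep_zero k
  have : NeZero n := ⟨hn.ne'⟩
  refine downClosedCount_congr (Equiv.neg _) (cycFenceStep_neg_iff fun e => ?_) k
  rw [Fin.val_neg_add_one]
  exact h e e.isLt

end CircularFence

section Segments

theorem length_filter_range_of_iff_lt {p : ℕ → Bool} {j L : ℕ} (h : ∀ i, p i = true ↔ i < j)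
    (hjL : j ≤ L) : ((List.range L).filter p).length = j := by
  obtain ⟨m, rfl⟩ := Nat.exists_eq_add_of_le hjL
  rw [List.range_add, List.filter_append, List.length_append, List.filter_eq_self.mpr,
    List.filter_eq_nil_iff.mpr]
  · simp
  · simp [h]
  · simp [h]

theorem segIdx_eq {α : List ℕ} {e j : ℕ} (hj : j < α.length) (h₁ : (α.take j).sum ≤ e)
    (h₂ : e < (α.take (j + 1)).sum) : segIdx α e = j := by
  have mono := List.monotone_sum_take α
  refine length_filter_range_of_iff_lt (fun i => ?_) hj.le
  rw [decide_eq_true_iff]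
  refine ⟨fun hi => ?_, fun hi => (mono (by omega : i + 1 ≤ j)).trans h₁⟩
  by_contra hij
  have : (α.take (j + 1)).sum ≤ (α.take (i + 1)).sum := mono (by omega)
  omega

theorem exists_segment {α : List ℕ} {e : ℕ} (he : e < α.sum) :
    ∃ j < α.length, (α.take j).sum ≤ e ∧ e < (α.take (j + 1)).sum := by
  induction α generalizing e with
  | nil => simp at he
  | cons a β ih =>
    by_cases hea : e < a
    · exact ⟨0, by simp, by simp, by simpa⟩
    · obtain ⟨j, hj, h₁, h₂⟩ := ih (e := e - a) (by simp at he; omega)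
      exact ⟨j + 1, by simpa, by simp; omega, by simp; omega⟩

theorem upEdge_cons_shift_iff {a : ℕ} {β : List ℕ} (heven : Even (a :: β).length) {e : ℕ}
    (he : e < a + β.sum) :
    upEdge (a :: β) ((e + a) % (a + β.sum)) ↔ ¬ upEdge (β ++ [a]) e := by
  rw [List.length_cons, Nat.even_add_one] at heven
  by_cases hβ : e < β.sum
  · obtain ⟨j, hj, h₁, h₂⟩ := exists_segment hβ
    have hrot : segIdx (β ++ [a]) e = j := by
      apply segIdx_eq (by simp; omega) <;> rwa [List.take_append_of_le_length (by omega)]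
    have hcons : segIdx (a :: β) (e + a) = j + 1 :=
      segIdx_eq (by simpa) (by simp; omega) (by simp; omega)
    rw [Nat.mod_eq_of_lt (by omega), upEdge, upEdge, hrot, hcons, Nat.even_add_one]
  · have hrot : segIdx (β ++ [a]) e = β.length :=
      segIdx_eq (by simp) (by simp; omega) (by simp; omega)
    have hcons : segIdx (a :: β) (e - β.sum) = 0 := segIdx_eq (by simp) (by simp) (by simp; omega)
    rw [Nat.mod_eq_sub_mod (by omega), Nat.mod_eq_of_lt (by omega),
      show e + a - (a + β.sum) = e - β.sum by omega, upEdge, upEdge, hrot, hcons]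
    simpa using heven

theorem sum_take_reverse (α : List ℕ) (i : ℕ) :
    (α.reverse.take i).sum = α.sum - (α.take (α.length - i)).sum := by
  rw [List.take_reverse, List.sum_reverse, ← List.sum_take_add_sum_drop α (α.length - i)]
  omega

theorem upEdge_reverse_iff {α : List ℕ} (heven : Even α.length) {e : ℕ} (he : e < α.sum) :
    upEdge α.reverse (α.sum - 1 - e) ↔ ¬ upEdge α e := by
  obtain ⟨j, hj, h₁, h₂⟩ := exists_segment he
  have hsum : (α.take (j + 1)).sum ≤ α.sum := by
    simpa using List.monotone_sum_take α (show j + 1 ≤ α.length by omega)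
  have hrev : segIdx α.reverse (α.sum - 1 - e) = α.length - 1 - j := by
    apply segIdx_eq (by simp; omega) <;> rw [sum_take_reverse]
    · rw [show α.length - (α.length - 1 - j) = j + 1 by omega]
      omega
    · rw [show α.length - (α.length - 1 - j + 1) = j by omega]
      omega
  rw [upEdge, upEdge, hrev, segIdx_eq hj h₁ h₂]
  obtain ⟨t, ht⟩ := heven
  rw [Nat.even_iff, Nat.even_iff]
  omega

end Segments

theorem cRank_rotate_one {α : List ℕ} (heven : Even α.length) {k : ℕ} (hk : k ≤ α.sum) :
    cRank (α.rotate 1) k = cRank α (α.sum - k) := by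
  cases α with
  | nil => simp_all
  | cons a β =>
    have hsum : (β ++ [a]).sum = a + β.sum := by simp [add_comm]
    rw [List.rotate_cons_succ, List.rotate_zero, cRank_eq_downClosedCount,
      cRank_eq_downClosedCount, hsum, List.sum_cons]
    exact downClosedCount_cycFenceStep_shift a (fun _ he => upEdge_cons_shift_iff heven he)
      (by simpa using hk)

theorem cRank_reverse {α : List ℕ} (heven : Even α.length) (k : ℕ) :
    cRank α.reverse k = cRank α k := by
  rw [cRank_eq_downClosedCount, cRank_eq_downClosedCount, List.sum_reverse]
  exact (downClosedCount_cycFenceStep_reflect (fun _ he => upEdge_reverse_iff heven he) k).symm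

theorem circular_rank_shift_reverses_general (α : List ℕ) (heven : Even α.length) :
    (∀ k ≤ α.sum, cRank (α.rotate 1) k = cRank α (α.sum - k)) ∧
    (∀ k s : ℕ, 0 < k → 0 < s →
      ∀ j ≤ (k :: List.replicate (2 * s - 1) 1).sum,
        cRank (k :: List.replicate (2 * s - 1) 1) j =
          cRank (k :: List.replicate (2 * s - 1) 1)
            ((k :: List.replicate (2 * s - 1) 1).sum - j)) := by
  refine ⟨fun k hk => cRank_rotate_one heven hk, fun k s _ hs j hj => ?_⟩
  set γ := k :: List.replicate (2 * s - 1) 1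
  have hγ : Even γ.length := ⟨s, by simp only [γ, List.length_cons, List.length_replicate]; omega⟩
  have hrev : γ.reverse = γ.rotate 1 := by simp [γ, List.rotate_cons_succ]
  rw [← cRank_rotate_one hγ hj, ← hrev, cRank_reverse hγ]

/-- A one-step cyclic shift of the composition reverses the rank sequence
of the circular fence poset; in particular the rank sequence of
`F̄((k,1,1,…,1))` (with an even number of parts) is symmetric. -/
theorem circular_rank_shift_reverses (α : List ℕ) (hα : IsComposition α)
    (heven : Even α.length) :
    (∀ k ≤ α.sum, cRank (α.rotate 1) k = cRank α (α.sum - k)) ∧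
    (∀ k s : ℕ, 0 < k → 0 < s →
      ∀ j ≤ (k :: List.replicate (2 * s - 1) 1).sum,
        cRank (k :: List.replicate (2 * s - 1) 1) j =
          cRank (k :: List.replicate (2 * s - 1) 1)
            ((k :: List.replicate (2 * s - 1) 1).sum - j)) :=
  circular_rank_shift_reverses_general α heven
end

section
/- For positive integers a and b, the rank polynomial of the circular fence poset F̄((1,a,1,b)) is R̄((1,a,1,b);q) = [a+2]_q·[b+2]_q − q^{a+1} − q^{b+1}, where [k]_q = 1+q+⋯+q^{k−1}; in particular F̄((1,a,1,b)) has exactly (a+2)(b+2)−2 lower ideals. -/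
attribute [local instance] Classical.propDecidable

/-!
Write node `0` of `F̄((1,a,1,b))` as `n = a + b + 2`, so that the nodes are `1, …, n`. Then the
poset consists of the two chains `a+1 ⪯ a ⪯ ⋯ ⪯ 1` and `n ⪯ n-1 ⪯ ⋯ ⪯ a+2`, together with the
relations `n ⪯ 1` and `a+1 ⪯ a+2`. A lower ideal is an initial segment of each chain, of lengths
`u ≤ a+1` and `v ≤ b+1`, and the two extra relations rule out exactly `(u,v) = (a+1,0)` and
`(0,b+1)`. Summing `q^(u+v)` over the remaining pairs gives
`[a+2]_q [b+2]_q - q^(a+1) - q^(b+1)`.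
-/

open Finset

theorem exists_threshold_of_imp_succ {P : ℕ → Prop} {lo hi : ℕ} (hlo : lo ≤ hi + 1)
    (hP : ∀ i, lo ≤ i → i < hi → P i → P (i + 1)) :
    ∃ c, lo ≤ c ∧ c ≤ hi + 1 ∧ ∀ i, lo ≤ i → i ≤ hi → (P i ↔ c ≤ i) := by
  let Q i := hi < i ∨ (lo ≤ i ∧ P i)
  have hQ : Monotone Q := monotone_nat_of_le_succ fun i hQi => by
    rcases hQi with h | ⟨h, hPi⟩
    · exact Or.inl (by omega)
    · rcases Nat.lt_or_ge i hi with h' | h'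
      · exact Or.inr ⟨by omega, hP i h h' hPi⟩
      · exact Or.inl (by omega)
  have hex : ∃ i, Q i := ⟨hi + 1, Or.inl (by omega)⟩
  have hfind : ∀ i, Q i ↔ Nat.find hex ≤ i :=
    fun i => ⟨Nat.find_min' hex, fun h => hQ h (Nat.find_spec hex)⟩
  refine ⟨Nat.find hex, ?_, (hfind _).1 (Or.inl (by omega)), fun i h1 h2 => ?_⟩
  · rcases Nat.find_spec hex with h | h <;> omega
  · rw [← hfind]
    exact ⟨fun h => Or.inr ⟨h1, h⟩, fun h => h.resolve_left (by omega) |>.2⟩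

section CyclicRep

variable {n : ℕ}

def cyclicRep (x : Fin n) : ℕ := if (x : ℕ) = 0 then n else x

theorem cyclicRep_injective : Function.Injective (cyclicRep (n := n)) := by
  intro x y h
  have := x.isLt
  have := y.isLt
  unfold cyclicRep at h
  split_ifs at h <;> ext <;> omega

theorem image_cyclicRep : univ.image (cyclicRep (n := n)) = Icc 1 n := by
  ext t
  simp only [mem_image, mem_univ, true_and, mem_Icc]
  constructor
  · rintro ⟨x, rfl⟩
    have := x.isLt
    unfold cyclicRep
    split_ifs <;> omega
  · rintro ⟨h1, h2⟩
    refine ⟨⟨t % n, Nat.mod_lt _ (by omega)⟩, ?_⟩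
    unfold cyclicRep
    rcases h2.lt_or_eq with h | rfl
    · simp only [Nat.mod_eq_of_lt h, if_neg (show t ≠ 0 by omega)]
    · simp

theorem cyclicRep_mem_Icc (x : Fin n) : cyclicRep x ∈ Icc 1 n :=
  image_cyclicRep ▸ mem_image_of_mem _ (mem_univ x)

theorem exists_cyclicRep_eq {t : ℕ} (ht : t ∈ Icc 1 n) : ∃ x : Fin n, cyclicRep x = t := by
  simpa [← image_cyclicRep] using ht

theorem card_filter_cyclicRep_mem {S : Finset ℕ} (hS : S ⊆ Icc 1 n) :
    #{x : Fin n | cyclicRep x ∈ S} = #S := by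
  rw [← card_image_of_injective _ cyclicRep_injective]
  congr 1
  ext t
  simp only [mem_image, mem_filter, mem_univ, true_and]
  refine ⟨fun ⟨x, hx, hxt⟩ => hxt ▸ hx, fun ht => ?_⟩
  obtain ⟨x, rfl⟩ := exists_cyclicRep_eq (hS ht)
  exact ⟨x, ht, rfl⟩

end CyclicRep

theorem isCIdeal_iff_forall_cStep {α : List ℕ} {I : Finset (Fin α.sum)} :
    IsCIdeal α I ↔ ∀ x y, cStep α x y → y ∈ I → x ∈ I := by
  refine ⟨fun hI x y hxy => hI x y (.single hxy), fun h x y hxy hy => ?_⟩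
  induction hxy using Relation.ReflTransGen.head_induction_on with
  | refl => exact hy
  | head hstep _ ih => exact h _ _ hstep ih

theorem sum_cRank_mul_pow {M : Type*} [CommSemiring M] (α : List ℕ) (q : M) :
    ∑ k ∈ range (α.sum + 1), (cRank α k : M) * q ^ k =
      ∑ I ∈ univ.filter (IsCIdeal α), q ^ #I := by
  rw [← sum_fiberwise_of_maps_to (g := card) (t := range (α.sum + 1))
    fun I _ => mem_range_succ_iff.2 (card_le_univ I |>.trans (Fintype.card_fin _).le)]
  refine sum_congr rfl fun k _ => ?_
  rw [cRank, Nat.card_eq_fintype_card, Fintype.card_subtype, filter_filter, ← nsmul_eq_mul,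
    ← sum_const]
  exact sum_congr rfl fun I hI => by rw [(mem_filter.1 hI).2.2]

namespace CircularFence1a1b

variable {a b : ℕ}

theorem sum_eq (a b : ℕ) : [1, a, 1, b].sum = a + b + 2 := by
  simp only [List.sum_cons, List.sum_nil]
  omega

theorem upEdge_iff {e : ℕ} (he : e < a + b + 2) : upEdge [1, a, 1, b] e ↔ e = 0 ∨ e = a + 1 := by
  rw [upEdge, segIdx, show List.range [1, a, 1, b].length = [0, 1, 2, 3] from rfl]
  simp only [List.filter_cons, List.filter_nil, decide_eq_true_eq]
  simp only [List.take, List.sum_cons, List.sum_nil, Nat.add_zero]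
  have h4 : ¬ 1 + (a + (1 + b)) ≤ e := by omega
  by_cases h1 : 1 ≤ e <;> by_cases h2 : 1 + a ≤ e <;> by_cases h3 : 1 + (a + 1) ≤ e <;>
    simp only [h1, h2, h3, h4, if_true, if_false, List.length_cons, List.length_nil,
      Nat.even_iff, true_iff] <;> omega

theorem cStep_iff {x y : Fin [1, a, 1, b].sum} :
    cStep [1, a, 1, b] x y ↔
      (cyclicRep x = a + b + 2 ∧ cyclicRep y = 1) ∨ (cyclicRep x = a + 1 ∧ cyclicRep y = a + 2) ∨
        (cyclicRep y ≠ a + 1 ∧ cyclicRep y < a + b + 2 ∧ cyclicRep x = cyclicRep y + 1) := by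
  have hn := sum_eq a b
  have hmod (z : Fin [1, a, 1, b].sum) : ((z : ℕ) + 1) % [1, a, 1, b].sum =
      if (z : ℕ) + 1 = [1, a, 1, b].sum then 0 else (z : ℕ) + 1 := by
    split_ifs with h
    · rw [h, Nat.mod_self]
    · exact Nat.mod_eq_of_lt (by omega)
  have hx := x.isLt
  have hy := y.isLt
  rw [cStep, hmod, hmod, upEdge_iff (by omega), upEdge_iff (by omega)]
  unfold cyclicRep
  split_ifs <;> omega

/-- For `p = (u, v)`: the lowest `u` nodes of the chain `a+1 ⪯ ⋯ ⪯ 1` and the lowest `v` nodes of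
the chain `a+b+2 ⪯ ⋯ ⪯ a+2`, in the coordinates of `cyclicRep`. -/
def pairSet (a b : ℕ) (p : ℕ × ℕ) : Finset ℕ :=
  Ico (a + 2 - p.1) (a + 2) ∪ Ico (a + b + 3 - p.2) (a + b + 3)

def pairIdeal (a b : ℕ) (p : ℕ × ℕ) : Finset (Fin [1, a, 1, b].sum) :=
  {x | cyclicRep x ∈ pairSet a b p}

def admissiblePairs (a b : ℕ) : Finset (ℕ × ℕ) :=
  range (a + 2) ×ˢ range (b + 2) \ {(a + 1, 0), (0, b + 1)}

theorem mem_pairIdeal {p : ℕ × ℕ} {x : Fin [1, a, 1, b].sum} :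
    x ∈ pairIdeal a b p ↔
      a + 2 - p.1 ≤ cyclicRep x ∧ cyclicRep x < a + 2 ∨
        a + b + 3 - p.2 ≤ cyclicRep x ∧ cyclicRep x < a + b + 3 := by
  simp only [pairIdeal, pairSet, mem_filter, mem_univ, true_and, mem_union, mem_Ico]

theorem mem_admissiblePairs {p : ℕ × ℕ} :
    p ∈ admissiblePairs a b ↔ p.1 < a + 2 ∧ p.2 < b + 2 ∧
      ¬(p.1 = a + 1 ∧ p.2 = 0) ∧ ¬(p.1 = 0 ∧ p.2 = b + 1) := by
  simp only [admissiblePairs, mem_sdiff, mem_product, mem_range, mem_insert, mem_singleton,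
    Prod.ext_iff]
  tauto

theorem isCIdeal_pairIdeal {p : ℕ × ℕ} (hp : p ∈ admissiblePairs a b) :
    IsCIdeal [1, a, 1, b] (pairIdeal a b p) := by
  rw [mem_admissiblePairs] at hp
  refine isCIdeal_iff_forall_cStep.2 fun x y hxy hy => ?_
  rw [cStep_iff] at hxy
  rw [mem_pairIdeal] at hy ⊢
  omega

theorem card_pairIdeal {p : ℕ × ℕ} (hp1 : p.1 ≤ a + 1) (hp2 : p.2 ≤ b + 1) :
    #(pairIdeal a b p) = p.1 + p.2 := by
  have hn := sum_eq a b
  have hsub : pairSet a b p ⊆ Icc 1 [1, a, 1, b].sum := by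
    intro t
    simp only [pairSet, mem_union, mem_Ico, mem_Icc]
    omega
  have hdisj : Disjoint (Ico (a + 2 - p.1) (a + 2)) (Ico (a + b + 3 - p.2) (a + b + 3)) :=
    disjoint_left.2 fun t h1 h2 => by
      simp only [mem_Ico] at h1 h2
      omega
  rw [pairIdeal, card_filter_cyclicRep_mem hsub, pairSet, card_union_of_disjoint hdisj,
    Nat.card_Ico, Nat.card_Ico]
  omega

theorem pairIdeal_injOn : Set.InjOn (pairIdeal a b) (admissiblePairs a b) := by
  intro p hp q hq h
  rw [mem_coe, mem_admissiblePairs] at hp hq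
  have hn := sum_eq a b
  have mem (t : ℕ) (ht : t ∈ Icc 1 [1, a, 1, b].sum) :
      t ∈ pairSet a b p ↔ t ∈ pairSet a b q := by
    obtain ⟨x, rfl⟩ := exists_cyclicRep_eq ht
    simpa only [pairIdeal, mem_filter, mem_univ, true_and] using Finset.ext_iff.1 h x
  have h1 := mem (a + 2 - max 1 (max p.1 q.1)) (by simp only [mem_Icc]; omega)
  have h2 := mem (a + b + 3 - max 1 (max p.2 q.2)) (by simp only [mem_Icc]; omega)
  simp only [pairSet, mem_union, mem_Ico] at h1 h2
  exact Prod.ext (by omega) (by omega)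

theorem exists_pairIdeal_eq {I : Finset (Fin [1, a, 1, b].sum)} (hI : IsCIdeal [1, a, 1, b] I) :
    ∃ p ∈ admissiblePairs a b, pairIdeal a b p = I := by
  have hn := sum_eq a b
  set V := I.image cyclicRep
  have closed (s t : ℕ) (hs : 1 ≤ s ∧ s ≤ a + b + 2)
      (hst : (s = a + b + 2 ∧ t = 1) ∨ (s = a + 1 ∧ t = a + 2) ∨
        (t ≠ a + 1 ∧ t < a + b + 2 ∧ s = t + 1)) (ht : t ∈ V) : s ∈ V := by
    obtain ⟨y, hy, rfl⟩ := mem_image.1 ht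
    obtain ⟨x, rfl⟩ := exists_cyclicRep_eq (n := [1, a, 1, b].sum) (t := s) (by rw [mem_Icc]; omega)
    exact mem_image_of_mem _ (hI x y (.single (cStep_iff.2 hst)) hy)
  obtain ⟨c, hc1, hca, hc⟩ := exists_threshold_of_imp_succ (P := (· ∈ V)) (lo := 1) (hi := a + 1)
    (by omega) fun i h1 h2 => closed (i + 1) i (by omega) (by omega)
  obtain ⟨d, hda, hdb, hd⟩ := exists_threshold_of_imp_succ (P := (· ∈ V)) (lo := a + 2)
    (hi := a + b + 2) (by omega) fun i h1 h2 => closed (i + 1) i (by omega) (by omega)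
  refine ⟨(a + 2 - c, a + b + 3 - d), mem_admissiblePairs.2 ⟨by omega, by omega, ?_, ?_⟩, ?_⟩
  · rintro ⟨h1, h2⟩
    dsimp only at h1 h2
    have h0 := closed (a + b + 2) 1 (by omega) (by omega) ((hc 1 le_rfl (by omega)).2 (by omega))
    have := (hd _ (by omega) le_rfl).1 h0
    omega
  · rintro ⟨h1, h2⟩
    dsimp only at h1 h2
    have h0 := closed (a + 1) (a + 2) (by omega) (by omega) ((hd _ le_rfl (by omega)).2 (by omega))
    have := (hc _ (by omega) le_rfl).1 h0
    omega
  · ext x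
    have hx := mem_Icc.1 (cyclicRep_mem_Icc x)
    rw [mem_pairIdeal, ← cyclicRep_injective.mem_finset_image]
    rcases le_or_gt (cyclicRep x) (a + 1) with h | h
    · rw [hc _ hx.1 h]
      omega
    · rw [hd _ h (by omega)]
      omega

theorem filter_isCIdeal_eq_image :
    univ.filter (IsCIdeal [1, a, 1, b]) = (admissiblePairs a b).image (pairIdeal a b) := by
  ext I
  simp only [mem_filter, mem_univ, true_and, mem_image]
  exact ⟨exists_pairIdeal_eq, fun ⟨p, hp, hI⟩ => hI ▸ isCIdeal_pairIdeal hp⟩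

theorem card_admissiblePairs : #(admissiblePairs a b) = (a + 2) * (b + 2) - 2 := by
  rw [admissiblePairs, card_sdiff_of_subset (by simp [insert_subset_iff]), card_product,
    card_range, card_range, card_pair (by simp)]

theorem sum_pow_admissiblePairs {M : Type*} [CommRing M] (q : M) :
    ∑ p ∈ admissiblePairs a b, q ^ (p.1 + p.2) =
      (∑ i ∈ range (a + 2), q ^ i) * (∑ j ∈ range (b + 2), q ^ j) - q ^ (a + 1) - q ^ (b + 1) := by
  rw [admissiblePairs, sum_sdiff_eq_sub (by simp [insert_subset_iff]), sum_pair (by simp),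
    sum_mul_sum, sum_product]
  simp only [pow_add, add_zero, zero_add]
  ring

theorem sum_pow_card_isCIdeal {M : Type*} [CommRing M] (q : M) :
    ∑ I ∈ univ.filter (IsCIdeal [1, a, 1, b]), q ^ #I =
      (∑ i ∈ range (a + 2), q ^ i) * (∑ j ∈ range (b + 2), q ^ j) - q ^ (a + 1) - q ^ (b + 1) := by
  rw [filter_isCIdeal_eq_image, sum_image pairIdeal_injOn, ← sum_pow_admissiblePairs]
  refine sum_congr rfl fun p hp => ?_
  have := mem_admissiblePairs.1 hp
  rw [card_pairIdeal (by omega) (by omega)]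

end CircularFence1a1b

open CircularFence1a1b

open Polynomial in
theorem circular_rank_1a1b_general (a b : ℕ) :
    (∑ k ∈ Finset.range ([1, a, 1, b].sum + 1), (cRank [1, a, 1, b] k : Polynomial ℤ) * X ^ k) =
      (∑ i ∈ Finset.range (a + 2), (X : Polynomial ℤ) ^ i) *
          (∑ i ∈ Finset.range (b + 2), (X : Polynomial ℤ) ^ i) -
        X ^ (a + 1) - X ^ (b + 1) ∧
    Nat.card {I : Finset (Fin ([1, a, 1, b].sum)) // IsCIdeal [1, a, 1, b] I} =
      (a + 2) * (b + 2) - 2 := by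
  refine ⟨by rw [sum_cRank_mul_pow, sum_pow_card_isCIdeal], ?_⟩
  rw [Nat.card_eq_fintype_card, Fintype.card_subtype, filter_isCIdeal_eq_image,
    card_image_of_injOn pairIdeal_injOn, card_admissiblePairs]

open Polynomial in
/-- the rank polynomial of `F̄((1,a,1,b))` is
`[a+2]_q·[b+2]_q − q^(a+1) − q^(b+1)`; in particular `F̄((1,a,1,b))` has exactly
`(a+2)(b+2) − 2` lower ideals. -/
theorem circular_rank_1a1b (a b : ℕ) (ha : 0 < a) (hb : 0 < b) :
    (∑ k ∈ Finset.range ([1, a, 1, b].sum + 1), (cRank [1, a, 1, b] k : Polynomial ℤ) * X ^ k) =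
      (∑ i ∈ Finset.range (a + 2), (X : Polynomial ℤ) ^ i) *
          (∑ i ∈ Finset.range (b + 2), (X : Polynomial ℤ) ^ i) -
        X ^ (a + 1) - X ^ (b + 1) ∧
    Nat.card {I : Finset (Fin ([1, a, 1, b].sum)) // IsCIdeal [1, a, 1, b] I} =
      (a + 2) * (b + 2) - 2 :=
  circular_rank_1a1b_general a b
end
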